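/- arXiv:0904.0424 — 5 statements merged into one kernel-verified Lean document; each statement's English description precedes it below -/
import Mathlib

section
/- Every quasisimple profinite group is finite. That is, if Q is a profinite group (compact, Hausdorff, totally disconnected topological group) that is topologically perfect (Q equals the closure of its commutator subgroup) and Q/Z(Q) is simple as an abstract group, then Q is finite. -/
/-!
An infinite profinite group `Q` has a proper open normal subgroup `H`, whose image in the simple
group `Q ⧸ Z(Q)` is trivial or everything. If `H ≤ Z(Q)`, the center has finite index, so `Q` has
only finitely many commutators and, by Schur, a finite (hence closed) commutator subgroup; being
dense, it is all of `Q`. Otherwise `H ⊔ Z(Q) = Q`, so every commutator lies in the closed subgroup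
`H`, and then so does the closure of `[Q, Q]`, which is `Q`.
-/

/-- A subgroup `H` of `G` is subnormal: there is a finite chain of subgroups from `H`
to `G`, each normal in the next. -/
def IsSubnormalSub {G : Type*} [Group G] (H : Subgroup G) : Prop :=
  ∃ (n : ℕ) (s : ℕ → Subgroup G), s 0 = H ∧ s n = ⊤ ∧
    ∀ i < n, s i ≤ s (i + 1) ∧ ((s i).subgroupOf (s (i + 1))).Normal

/-- A group is quasisimple if it is perfect and its central quotient is simple. -/
def IsQuasisimple (G : Type*) [Group G] : Prop :=
  commutator G = ⊤ ∧ IsSimpleGroup (G ⧸ Subgroup.center G)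

open scoped commutatorElement

open Subgroup

section

variable {G : Type*} [Group G]

theorem commutatorElement_mul_mem_center {z w : G} (hz : z ∈ center G) (hw : w ∈ center G)
    (g h : G) : ⁅g * z, h * w⁆ = ⁅g, h⁆ := by
  rw [mem_center_iff] at hz hw
  simp only [commutatorElement_def, mul_inv_rev]
  calc g * z * (h * w) * (z⁻¹ * g⁻¹) * (w⁻¹ * h⁻¹)
      = g * (h * w) * z * z⁻¹ * g⁻¹ * w⁻¹ * h⁻¹ := by rw [mul_assoc g z, ← hz]; group
    _ = g * h * (w * g⁻¹) * w⁻¹ * h⁻¹ := by group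
    _ = g * h * g⁻¹ * h⁻¹ := by rw [← hw g⁻¹]; group

theorem finite_commutatorSet_of_finite_quotient_center [Finite (G ⧸ center G)] :
    Finite (commutatorSet G) := by
  refine (Set.Finite.subset (Set.finite_range
    fun p : (G ⧸ center G) × (G ⧸ center G) => ⁅p.1.out, p.2.out⁆) ?_).to_subtype
  rintro _ ⟨g, h, rfl⟩
  obtain ⟨z, hz⟩ := QuotientGroup.mk_out_eq_mul (center G) g
  obtain ⟨w, hw⟩ := QuotientGroup.mk_out_eq_mul (center G) h
  exact ⟨(g, h), by simp only [hz, hw, commutatorElement_mul_mem_center z.2 w.2]⟩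

theorem commutator_le_of_sup_center_eq_top {N : Subgroup G} (hN : N ⊔ center G = ⊤) :
    commutator G ≤ N := by
  rw [commutator_eq_closure, closure_le]
  rintro _ ⟨g, h, rfl⟩
  obtain ⟨a, ha, z, hz, rfl⟩ := mem_sup_of_normal_right.mp (hN ▸ mem_top g)
  obtain ⟨b, hb, w, hw, rfl⟩ := mem_sup_of_normal_right.mp (hN ▸ mem_top h)
  rw [commutatorElement_mul_mem_center hz hw]
  exact N.mul_mem (N.mul_mem (N.mul_mem ha hb) (N.inv_mem ha)) (N.inv_mem hb)

theorem le_center_or_sup_center_eq_top [IsSimpleGroup (G ⧸ center G)] (N : Subgroup G)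
    [N.Normal] : N ≤ center G ∨ N ⊔ center G = ⊤ := by
  refine (IsSimpleGroup.eq_bot_or_eq_top_of_normal (N.map (QuotientGroup.mk' (center G)))
    (Normal.map ‹_› _ (QuotientGroup.mk'_surjective _))).imp (fun h => ?_) (fun h => ?_)
  · rwa [Subgroup.map_eq_bot_iff, QuotientGroup.ker_mk'] at h
  · simpa [comap_map_eq] using congrArg (comap (QuotientGroup.mk' (center G))) h

end

section

variable {G : Type*} [Group G] [TopologicalSpace G] [IsTopologicalGroup G]

theorem finite_of_topologicalClosure_commutator_eq_top [T1Space G]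
    [(center G).FiniteIndex] (hperf : (commutator G).topologicalClosure = ⊤) : Finite G := by
  have : Finite (commutatorSet G) := finite_commutatorSet_of_finite_quotient_center
  have hfin : (commutator G : Set G).Finite :=
    Set.finite_coe_iff.mp (inferInstance : Finite (commutator G))
  rw [← SetLike.coe_set_eq, topologicalClosure_coe, hfin.isClosed.closure_eq,
    coe_top] at hperf
  exact Set.finite_univ_iff.mp (hperf ▸ hfin)

theorem exists_openNormalSubgroup_notMem [CompactSpace G] [T2Space G]
    [TotallyDisconnectedSpace G] {x : G} (hx : x ≠ 1) : ∃ H : OpenNormalSubgroup G, x ∉ H := by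
  obtain ⟨W, hW, hW1, hWx⟩ :=
    compact_exists_isClopen_in_isOpen isOpen_compl_singleton
      (Set.mem_compl_singleton_iff.mpr hx.symm)
  obtain ⟨H, hHW⟩ := IsTopologicalGroup.exist_openNormalSubgroup_sub_clopen_nhds_of_one hW hW1
  exact ⟨H, fun hxH => hWx (hHW hxH) rfl⟩

end

/-- Every quasisimple profinite group is finite. -/
theorem quasisimple_profinite_finite (Q : Type*) [Group Q] [TopologicalSpace Q]
    [IsTopologicalGroup Q] [CompactSpace Q] [T2Space Q] [TotallyDisconnectedSpace Q]
    (hperf : (commutator Q).topologicalClosure = ⊤)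
    (hsimple : IsSimpleGroup (Q ⧸ Subgroup.center Q)) :
    Finite Q := by
  by_contra hinf
  have : Infinite Q := not_finite_iff_infinite.mp hinf
  obtain ⟨x, hx⟩ := exists_ne (1 : Q)
  obtain ⟨H, hxH⟩ := exists_openNormalSubgroup_notMem hx
  have : H.FiniteIndex := H.finiteIndex_of_finite_quotient
  rcases le_center_or_sup_center_eq_top H.toSubgroup with hcenter | hsup
  · have := finiteIndex_of_le hcenter
    exact hinf (finite_of_topologicalClosure_commutator_eq_top hperf)
  · have hle := (commutator Q).topologicalClosure_minimal
      (commutator_le_of_sup_center_eq_top hsup) H.isClosed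
    have hH : H.toSubgroup = ⊤ := top_le_iff.mp (hperf ▸ hle)
    exact hxH (show x ∈ H.toSubgroup from hH ▸ mem_top x)
end

section
/- Let G be a finite group and let Q and L be two distinct components of G (subnormal quasisimple subgroups). Then Q and L commute elementwise: [Q, L] = 1. -/
/-- A component of a group: a subnormal quasisimple subgroup. -/
def IsComponentFin {G : Type*} [Group G] (Q : Subgroup G) : Prop :=
  IsSubnormalSub Q ∧ IsQuasisimple Q

/-- The Fitting subgroup: the subgroup generated by all normal nilpotent subgroups. -/
def fittingSub (G : Type*) [Group G] : Subgroup G :=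
  ⨆ H ∈ {H : Subgroup G | H.Normal ∧ Group.IsNilpotent H}, H

/-- The layer: the subgroup generated by all components. -/
def layerSub (G : Type*) [Group G] : Subgroup G :=
  ⨆ Q ∈ {Q : Subgroup G | IsComponentFin Q}, Q

/-- The generalised Fitting subgroup `F*(G) = F(G) E(G)`. -/
def fstarSub (G : Type*) [Group G] : Subgroup G := fittingSub G ⊔ layerSub G

/-!
A quasisimple subnormal subgroup `K` lies in or centralizes every subgroup `N` normalized by some
`B ≥ K`. For `N ⊴ K` this is quasisimplicity, and it climbs a subnormal chain
`K = K₀ ⊴ K₁ ⊴ ⋯` (cut down to `B`): if `K` centralizes `N ∩ Kᵢ`, then `⁅K, N ∩ Kᵢ₊₁⁆ ≤ N ∩ Kᵢ`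
commutes with `K`, and the three subgroups lemma with `K = ⁅K, K⁆` gives `⁅K, N ∩ Kᵢ₊₁⁆ = 1`.
Descending a subnormal chain of `L` with this dichotomy gives `Q ≤ L` or `⁅Q, L⁆ = 1`; by symmetry,
distinct components commute.
-/

open Subgroup

theorem IsQuasisimple.eq_top_or_le_center {Q : Type*} [Group Q] (hQ : IsQuasisimple Q)
    (T : Subgroup Q) [hT : T.Normal] : T = ⊤ ∨ T ≤ center Q := by
  have := hQ.2
  rcases (hT.map _ (QuotientGroup.mk'_surjective (center Q))).eq_bot_or_eq_top with h | h
  · rw [Subgroup.map_eq_bot_iff, QuotientGroup.ker_mk'] at h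
    exact Or.inr h
  · have hsup : T ⊔ center Q = ⊤ := by
      rw [← QuotientGroup.ker_mk' (center Q), ← comap_map_eq, h, comap_top]
    rw [← top_le_iff, ← hQ.1]
    exact Or.inl (Normal.commutator_le_of_self_sup_commutative_eq_top hsup inferInstance)

section

variable {G : Type*} [Group G]

theorem IsQuasisimple.commutator_self {K : Subgroup G} (hK : IsQuasisimple K) : ⁅K, K⁆ = K :=
  isPerfect_iff.mp (Group.isPerfect_def.mpr hK.1)

theorem IsQuasisimple.le_or_commutator_eq_bot {K N : Subgroup G} (hK : IsQuasisimple K)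
    (hNK : N ≤ K) (hKN : K ≤ normalizer (N : Set G)) : K ≤ N ∨ ⁅K, N⁆ = ⊥ := by
  have : (N.subgroupOf K).Normal := (normal_subgroupOf_iff_le_normalizer hNK).mpr hKN
  rcases hK.eq_top_or_le_center (N.subgroupOf K) with h | h
  · exact Or.inl (subgroupOf_eq_top.mp h)
  · rw [← commutator_top_left_eq_bot_iff_le_center] at h
    have := congrArg (map K.subtype) h
    rw [map_commutator, map_subgroupOf_eq_of_le hNK, ← MonoidHom.range_eq_map, range_subtype,
      Subgroup.map_bot] at this
    exact Or.inr this

def LeOrCentralizesNormal (K X : Subgroup G) : Prop :=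
  ∀ N : Subgroup G, N ≤ X → X ≤ normalizer (N : Set G) → K ≤ N ∨ ⁅K, N⁆ = ⊥

theorem LeOrCentralizesNormal.of_le_normalizer {K X Y : Subgroup G} (hK : ⁅K, K⁆ = K)
    (hKX : K ≤ X) (hXY : X ≤ Y) (hYX : Y ≤ normalizer (X : Set G))
    (h : LeOrCentralizesNormal K X) : LeOrCentralizesNormal K Y := by
  intro N hNY hYN
  have hXN : X ≤ normalizer ((N ⊓ X : Subgroup G) : Set G) :=
    (le_inf (hXY.trans hYN) le_normalizer).trans inf_normalizer_le_normalizer_inf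
  rcases h (N ⊓ X) inf_le_right hXN with hle | hbot
  · exact Or.inl (hle.trans inf_le_left)
  · have hKN : ⁅K, N⁆ ≤ N ⊓ X :=
      le_inf (le_normalizer_iff_commutator_le_right.mp (hKX.trans (hXY.trans hYN)))
        ((commutator_mono hKX le_rfl).trans
          (le_normalizer_iff_commutator_le_left.mp (hNY.trans hYX)))
    have h1 : ⁅⁅K, N⁆, K⁆ = ⊥ := by
      rw [← le_bot_iff, ← hbot, commutator_comm K (N ⊓ X)]
      exact commutator_mono hKN le_rfl
    have h2 : ⁅⁅N, K⁆, K⁆ = ⊥ := by rwa [commutator_comm N K]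
    simpa only [hK] using Or.inr (commutator_commutator_eq_bot_of_rotate h1 h2)

theorem IsQuasisimple.le_or_commutator_eq_bot_of_isSubnormalSub {K B N : Subgroup G}
    (hK : IsQuasisimple K) (hKs : IsSubnormalSub K) (hKB : K ≤ B) (hNB : N ≤ B)
    (hBN : B ≤ normalizer (N : Set G)) : K ≤ N ∨ ⁅K, N⁆ = ⊥ := by
  obtain ⟨n, s, hs0, hsn, hs⟩ := hKs
  suffices ∀ i ≤ n, K ≤ s i ∧ LeOrCentralizesNormal K (s i ⊓ B) by
    have hB := (this n le_rfl).2
    rw [hsn, top_inf_eq] at hB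
    exact hB N hNB hBN
  intro i
  induction i with
  | zero =>
    intro _
    rw [hs0, inf_of_le_left hKB]
    exact ⟨le_rfl, fun _ => hK.le_or_commutator_eq_bot⟩
  | succ i ih =>
    intro hi
    obtain ⟨hKsi, hdich⟩ := ih (by omega)
    obtain ⟨hle, hnormal⟩ := hs i hi
    have hnorm : s (i + 1) ⊓ B ≤ normalizer ((s i ⊓ B : Subgroup G) : Set G) :=
      (inf_le_inf ((normal_subgroupOf_iff_le_normalizer hle).mp hnormal) le_normalizer).trans
        inf_normalizer_le_normalizer_inf
    exact ⟨hKsi.trans hle, hdich.of_le_normalizer hK.commutator_self (le_inf hKsi hKB)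
      (inf_le_inf_right B hle) hnorm⟩

theorem IsComponentFin.le_or_commutator_eq_bot {Q L : Subgroup G} (hQ : IsComponentFin Q)
    (hL : IsSubnormalSub L) : Q ≤ L ∨ ⁅Q, L⁆ = ⊥ := by
  obtain ⟨m, t, ht0, htm, ht⟩ := hL
  rw [← ht0]
  refine Nat.decreasingInduction (motive := fun i _ => Q ≤ t i ∨ ⁅Q, t i⁆ = ⊥) ?_
    (Or.inl (htm ▸ le_top)) (Nat.zero_le m)
  intro i hi ih
  obtain ⟨hle, hnormal⟩ := ht i hi
  rcases ih with hQt | hbot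
  · exact hQ.2.le_or_commutator_eq_bot_of_isSubnormalSub hQ.1 hQt hle
      ((normal_subgroupOf_iff_le_normalizer hle).mp hnormal)
  · exact Or.inr (le_bot_iff.mp (hbot ▸ commutator_mono le_rfl hle))

end

theorem components_commute_general {G : Type*} [Group G] (Q L : Subgroup G)
    (hQ : IsComponentFin Q) (hL : IsComponentFin L) (hne : Q ≠ L) :
    ⁅Q, L⁆ = ⊥ := by
  rcases hQ.le_or_commutator_eq_bot hL.1 with hQL | hQL
  · rcases hL.le_or_commutator_eq_bot hQ.1 with hLQ | hLQ
    · exact absurd (le_antisymm hQL hLQ) hne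
    · rwa [commutator_comm]
  · exact hQL

/-- Two distinct components of a finite group commute elementwise. -/
theorem components_commute {G : Type*} [Group G] [Finite G] (Q L : Subgroup G)
    (hQ : IsComponentFin Q) (hL : IsComponentFin L) (hne : Q ≠ L) :
    ⁅Q, L⁆ = ⊥ :=
  components_commute_general Q L hQ hL hne
end

section
/- Let G be a finite group, Q a component of G, and P a normal nilpotent subgroup of G. Then [Q, P] = 1; in particular every component of G centralizes the Fitting subgroup F(G). -/
/-!
A nilpotent normal subgroup of a quasisimple group `Q` is central, since otherwise the simple
perfect group `Q / Z(Q)` would be a nilpotent image of it. For a subnormal quasisimple `Q`,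
take a chain `Q = s₀ ⊴ s₁ ⊴ ⋯ ⊴ sₙ` whose top normalizes a nilpotent `P ≤ sₙ`. Then
`⁅Q, P⁆ ≤ P ⊓ sₙ₋₁`, and by induction on `n` the group `Q` centralizes `P ⊓ sₙ₋₁`, so
`⁅⁅Q, P⁆, Q⁆ = 1`; the three subgroup lemma and `⁅Q, Q⁆ = Q` give `⁅Q, P⁆ = 1`.
-/

open Subgroup

lemma le_of_forall_lt_le_succ {α : Type*} [Preorder α] {f : ℕ → α} {n : ℕ}
    (h : ∀ i < n, f i ≤ f (i + 1)) : f 0 ≤ f n := by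
  induction n with
  | zero => rfl
  | succ n ih => exact (ih fun i hi => h i (by omega)).trans (h n n.lt_succ_self)

lemma IsQuasisimple.isPerfect {H : Type*} [Group H] (hH : IsQuasisimple H) :
    Group.IsPerfect H :=
  ⟨hH.1⟩

lemma IsQuasisimple.le_center_of_isNilpotent {H : Type*} [Group H] (hH : IsQuasisimple H)
    {N : Subgroup H} (hN : N.Normal) [Group.IsNilpotent N] : N ≤ center H := by
  have := hH.isPerfect
  have := hH.2
  let π := QuotientGroup.mk' (center H)
  have hπ : Function.Surjective π := QuotientGroup.mk'_surjective _
  rcases (hN.map π hπ).eq_bot_or_eq_top with hbot | htop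
  · rwa [Subgroup.map_eq_bot_iff, QuotientGroup.ker_mk'] at hbot
  · have hsurj : Function.Surjective (π.comp N.subtype) := by
      rw [← MonoidHom.range_eq_top, MonoidHom.range_comp, range_subtype, htop]
    exact absurd (Group.nilpotent_of_surjective _ hsurj) (Group.IsPerfect.not_isNilpotent _)

section

variable {G : Type*} [Group G]

lemma Subgroup.isNilpotent_of_le {H K : Subgroup G} (hHK : H ≤ K) [Group.IsNilpotent K] :
    Group.IsNilpotent H :=
  Group.nilpotent_of_mulEquiv (subgroupOfEquivOfLe hHK)

lemma IsQuasisimple.commutator_eq_bot_of_isNilpotent {Q N : Subgroup G} (hQ : IsQuasisimple Q)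
    (hNQ : N ≤ Q) (hQN : Q ≤ normalizer (N : Set G)) [Group.IsNilpotent N] : ⁅Q, N⁆ = ⊥ := by
  have hnormal : (N.subgroupOf Q).Normal := (normal_subgroupOf_iff_le_normalizer hNQ).mpr hQN
  have : Group.IsNilpotent (N.subgroupOf Q) :=
    Group.nilpotent_of_mulEquiv (subgroupOfEquivOfLe hNQ).symm
  have hcentral := hQ.le_center_of_isNilpotent hnormal
  rw [eq_bot_iff, commutator_le]
  intro q hq n hn
  have hqn := mem_center_iff.mp (hcentral (mem_subgroupOf.mpr hn : ⟨n, hNQ hn⟩ ∈ _)) ⟨q, hq⟩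
  rw [mem_bot, commutatorElement_eq_one_iff_mul_comm]
  exact congrArg Subtype.val hqn

lemma commutator_eq_bot_of_commutator_commutator_eq_bot {Q P : Subgroup G} [Group.IsPerfect Q]
    (h : ⁅⁅Q, P⁆, Q⁆ = ⊥) : ⁅Q, P⁆ = ⊥ := by
  have h' : ⁅⁅P, Q⁆, Q⁆ = ⊥ := by rwa [commutator_comm P Q]
  rw [← commutator_commutator_eq_bot_of_rotate h h', commutator_eq_self]

theorem IsQuasisimple.commutator_eq_bot_of_chain {Q : Subgroup G} (hQ : IsQuasisimple Q)
    {s : ℕ → Subgroup G} (h0 : s 0 = Q) (n : ℕ)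
    (hs : ∀ i < n, s i ≤ s (i + 1) ∧ ((s i).subgroupOf (s (i + 1))).Normal)
    (P : Subgroup G) [Group.IsNilpotent P] (hPs : P ≤ s n) (hsP : s n ≤ normalizer (P : Set G)) :
    ⁅Q, P⁆ = ⊥ := by
  induction n generalizing P with
  | zero => subst h0; exact hQ.commutator_eq_bot_of_isNilpotent hPs hsP
  | succ n ih =>
    obtain ⟨hle, hnormal⟩ := hs n n.lt_succ_self
    have hQs : Q ≤ s n := h0 ▸ le_of_forall_lt_le_succ fun i hi => (hs i (by omega)).1
    have hsn : s (n + 1) ≤ normalizer (s n : Set G) :=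
      (normal_subgroupOf_iff_le_normalizer hle).mp hnormal
    have := isNilpotent_of_le (inf_le_left : P ⊓ s n ≤ P)
    have hcomm : ⁅Q, P ⊓ s n⁆ = ⊥ :=
      ih (fun i hi => hs i (by omega)) _ inf_le_right
        ((le_inf (hle.trans hsP) le_normalizer).trans inf_normalizer_le_normalizer_inf)
    have hQP : ⁅Q, P⁆ ≤ P ⊓ s n :=
      le_inf (le_normalizer_iff_commutator_le_right.mp ((hQs.trans hle).trans hsP))
        ((commutator_mono hQs le_rfl).trans
          (le_normalizer_iff_commutator_le_left.mp (hPs.trans hsn)))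
    have := hQ.isPerfect
    refine commutator_eq_bot_of_commutator_commutator_eq_bot (eq_bot_iff.mpr ?_)
    calc ⁅⁅Q, P⁆, Q⁆ ≤ ⁅P ⊓ s n, Q⁆ := commutator_mono hQP le_rfl
      _ = ⊥ := by rw [commutator_comm, hcomm]

lemma IsComponentFin.commutator_eq_bot {Q P : Subgroup G} (hQ : IsComponentFin Q) (hP : P.Normal)
    [Group.IsNilpotent P] : ⁅Q, P⁆ = ⊥ := by
  obtain ⟨⟨n, s, h0, hn, hs⟩, hQs⟩ := hQ
  exact hQs.commutator_eq_bot_of_chain h0 n hs P (hn ▸ le_top)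
    (hn ▸ (normalizer_eq_top_iff.mpr hP).ge)

lemma commutator_fittingSub_eq_bot {Q : Subgroup G}
    (hQ : ∀ N : Subgroup G, N.Normal → Group.IsNilpotent N → ⁅Q, N⁆ = ⊥) :
    ⁅Q, fittingSub G⁆ = ⊥ := by
  rw [commutator_comm, commutator_eq_bot_iff_le_centralizer, fittingSub]
  refine iSup₂_le fun N hN => ?_
  rw [← commutator_eq_bot_iff_le_centralizer, commutator_comm]
  exact hQ N hN.1 hN.2

end

theorem component_commutes_with_nilpotent_general {G : Type*} [Group G]
    (Q P : Subgroup G) (hQ : IsComponentFin Q) (hP : P.Normal)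
    (hnil : Group.IsNilpotent P) :
    ⁅Q, P⁆ = ⊥ ∧ ⁅Q, fittingSub G⁆ = ⊥ :=
  ⟨hQ.commutator_eq_bot hP, commutator_fittingSub_eq_bot fun _ hN _ => hQ.commutator_eq_bot hN⟩

/-- A component of a finite group commutes with every normal nilpotent subgroup;
in particular it centralizes the Fitting subgroup. -/
theorem component_commutes_with_nilpotent {G : Type*} [Group G] [Finite G]
    (Q P : Subgroup G) (hQ : IsComponentFin Q) (hP : P.Normal)
    (hnil : Group.IsNilpotent P) :
    ⁅Q, P⁆ = ⊥ ∧ ⁅Q, fittingSub G⁆ = ⊥ :=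
  component_commutes_with_nilpotent_general Q P hQ hP hnil
end

section
/- Let G be a finite group. Then every minimal normal subgroup N of G is either abelian or contained in E(G), the subgroup generated by the components of G. In particular F*(G) ≠ 1 whenever G ≠ 1. -/
/-!
If `N ⊓ C_G(N)` is nontrivial it is a normal subgroup of `G` inside `N`, hence equal to `N`, and
`N` is abelian. Otherwise take a minimal nontrivial subnormal subgroup `K ≤ N`; it is simple.
If `K` were abelian it would be a `p`-group, and subnormal `p`-subgroups lie in `O_p(G)`
(because `O_p(K) ≤ O_p(L)` whenever `K ⊴ L`); minimality of `N` would then make `N` a nontrivial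
`p`-group, whose centre is nontrivial. So `K` is nonabelian simple: all its conjugates are
components, and their normal closure, a nontrivial normal subgroup of `G` inside `N`, is `N`.
An abelian `N` lies in `F(G)`, so in either case `F*(G) ≠ 1`.
-/

namespace Subgroup

variable {G : Type*} [Group G]

theorem IsSubnormal.isSubnormalSub {H : Subgroup G} (hH : H.IsSubnormal) : IsSubnormalSub H := by
  obtain ⟨n, s, hmono, hnormal, h0, hn⟩ := isSubnormal_iff.mp hH
  exact ⟨n, s, h0, hn, fun i _ => ⟨hmono i.le_succ, hnormal i⟩⟩

section PCore

variable (p : ℕ)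

/-- `O_p(K)` as a subgroup of `G`: the join of the `p`-subgroups of `K` normalised by `K`. -/
def pCore (K : Subgroup G) : Subgroup G :=
  sSup {P | P ≤ K ∧ K ≤ normalizer (P : Set G) ∧ IsPGroup p P}

variable {p} {K L P : Subgroup G}

theorem le_pCore (hPK : P ≤ K) (hKP : K ≤ normalizer (P : Set G)) (hP : IsPGroup p P) :
    P ≤ K.pCore p :=
  le_sSup ⟨hPK, hKP, hP⟩

theorem pCore_mem [Finite G] :
    K.pCore p ∈ {P | P ≤ K ∧ K ≤ normalizer (P : Set G) ∧ IsPGroup p P} := by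
  refine SupClosed.sSup_mem ?_ (Set.toFinite _)
    ⟨bot_le, le_normalizer_of_normal, IsPGroup.of_bot⟩ subset_rfl
  rintro P ⟨hPK, hKP, hP⟩ Q ⟨hQK, hKQ, hQ⟩
  exact ⟨sup_le hPK hQK, (le_inf hKP hKQ).trans (normalizer_inf_normalizer_le_normalizer_sup P Q),
    hP.to_sup_of_normal_right' hQ (hPK.trans hKQ)⟩

theorem isPGroup_pCore [Finite G] : IsPGroup p (K.pCore p) :=
  pCore_mem.2.2

theorem normalizer_le_normalizer_pCore [Finite G] :
    normalizer (K : Set G) ≤ normalizer (K.pCore p : Set G) := by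
  refine le_normalizer_iff.mpr fun g hg x hx => ?_
  have hgK : K.map (MulAut.conj g).toMonoidHom = K := mem_normalizer_iff_map_conj_eq.mp hg
  have hmap : (K.pCore p).map (MulAut.conj g).toMonoidHom ≤ K.pCore p := by
    obtain ⟨hle, hnorm, hp⟩ := pCore_mem (K := K) (p := p)
    refine le_pCore ?_ ?_ (hp.map _)
    · exact (map_mono hle).trans hgK.le
    · exact hgK.ge.trans ((map_mono hnorm).trans (le_normalizer_map _))
  exact hmap ⟨x, hx, rfl⟩

theorem pCore_le_pCore [Finite G] (hKL : K ≤ L) (hLK : L ≤ normalizer (K : Set G)) :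
    K.pCore p ≤ L.pCore p :=
  le_pCore (pCore_mem.1.trans hKL) (hLK.trans normalizer_le_normalizer_pCore) isPGroup_pCore

theorem pCore_top_normal [Finite G] : ((⊤ : Subgroup G).pCore p).Normal :=
  normalizer_eq_top_iff.mp <|
    top_le_iff.mp ((normalizer_eq_top (H := ⊤)).ge.trans normalizer_le_normalizer_pCore)

theorem IsSubnormal.pCore_le_pCore_top [Finite G] (hK : K.IsSubnormal) :
    K.pCore p ≤ (⊤ : Subgroup G).pCore p := by
  induction hK with
  | top => exact le_rfl
  | step K L hKL _ hnormal ih =>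
    exact (pCore_le_pCore hKL ((normal_subgroupOf_iff_le_normalizer hKL).mp hnormal)).trans ih

theorem IsSubnormal.le_pCore_top [Finite G] (hP : P.IsSubnormal) (hp : IsPGroup p P) :
    P ≤ (⊤ : Subgroup G).pCore p :=
  (le_pCore le_rfl le_normalizer hp).trans hP.pCore_le_pCore_top

end PCore

theorem IsSubnormal.exists_isSimpleGroup_le [Finite G] {H : Subgroup G} (hH : H.IsSubnormal)
    (hbot : H ≠ ⊥) : ∃ K ≤ H, K.IsSubnormal ∧ IsSimpleGroup K := by
  obtain ⟨K, hKH, ⟨hK, hKbot⟩, hKmin⟩ :=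
    exists_minimal_le_of_wellFoundedLT (fun K : Subgroup G => K.IsSubnormal ∧ K ≠ ⊥) H ⟨hH, hbot⟩
  have : Nontrivial K := (nontrivial_iff_ne_bot K).mpr hKbot
  refine ⟨K, hKH, hK, ⟨fun L hL => ?_⟩⟩
  by_cases hLbot : L.map K.subtype = ⊥
  · exact .inl ((map_eq_bot_iff_of_injective L K.subtype_injective).mp hLbot)
  · have hKL : K ≤ L.map K.subtype := hKmin ⟨hL.isSubnormal.trans' hK, hLbot⟩ (map_subtype_le L)
    refine .inr (eq_top_iff.mpr fun k _ => ?_)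
    obtain ⟨l, hl, hlk⟩ := hKL k.2
    exact K.subtype_injective hlk ▸ hl

end Subgroup

open Subgroup

theorem isQuasisimple_of_isSimpleGroup {Q : Type*} [Group Q] [IsSimpleGroup Q]
    (hQ : ¬ IsMulCommutative Q) : IsQuasisimple Q := by
  refine ⟨(commutator_normal ⊤ ⊤).eq_bot_or_eq_top.resolve_left fun h => hQ ?_, ?_⟩
  · exact isMulCommutative_iff.mpr fun a b =>
      (mem_centralizer_iff.mp (commutator_eq_bot_iff_le_centralizer.mp h (mem_top a)) b
        (mem_top b)).symm
  · have hZ : center Q = ⊥ := (center Q).normal_of_characteristic.eq_bot_or_eq_top.resolve_right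
      fun h => hQ (isMulCommutative_iff.mpr fun a b =>
        (mem_center_iff.mp (h ▸ mem_top a) b).symm)
    exact ((QuotientGroup.quotientMulEquivOfEq hZ).trans QuotientGroup.quotientBot).isSimpleGroup

section Layer

variable {G : Type*} [Group G]

theorem isComponentFin_of_isSimpleGroup {K : Subgroup G} (hK : K.IsSubnormal) [IsSimpleGroup K]
    (hKc : ¬ IsMulCommutative K) : IsComponentFin K :=
  ⟨hK.isSubnormalSub, isQuasisimple_of_isSimpleGroup hKc⟩

theorem IsComponentFin.le_layerSub {Q : Subgroup G} (hQ : IsComponentFin Q) : Q ≤ layerSub G :=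
  le_biSup (fun Q => Q) hQ

theorem le_fittingSub {H : Subgroup G} (hH : H.Normal) (hnil : Group.IsNilpotent H) :
    H ≤ fittingSub G :=
  le_biSup (fun H => H) ⟨hH, hnil⟩

open scoped Pointwise in
theorem normalClosure_le_layerSub {K : Subgroup G} (hK : K.IsSubnormal) [IsSimpleGroup K]
    (hKc : ¬ IsMulCommutative K) : normalClosure (K : Set G) ≤ layerSub G := by
  refine (closure_le _).mpr fun x hx => ?_
  obtain ⟨k, hk, g, rfl⟩ :=
    (Group.mem_conjugatesOfSet_iff.mp hx).imp fun _ => And.imp_right isConj_iff.mp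
  have e := equivSMul (MulAut.conj g) K
  have : IsSimpleGroup (MulAut.conj g • K : Subgroup G) := e.symm.isSimpleGroup
  have hcomp : IsComponentFin (MulAut.conj g • K) :=
    isComponentFin_of_isSimpleGroup (hK.smul _)
      fun h => hKc (e.symm.surjective.mul_comm (f := e.symm.toMulHom) h)
  exact hcomp.le_layerSub (smul_mem_pointwise_smul k (MulAut.conj g) K hk)

end Layer

section MinimalNormal

variable {G : Type*} [Group G] [Finite G] {N : Subgroup G}

theorem IsPGroup.inf_centralizer_ne_bot {p : ℕ} [Fact p.Prime] (hp : IsPGroup p N)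
    (hbot : N ≠ ⊥) : N ⊓ centralizer (N : Set G) ≠ ⊥ := by
  have : Nontrivial N := (nontrivial_iff_ne_bot N).mpr hbot
  have := hp.center_nontrivial
  obtain ⟨z, hz⟩ := exists_ne (1 : center N)
  intro h
  have hzZ : ((z : N) : G) ∈ N ⊓ centralizer (N : Set G) :=
    ⟨(z : N).2, mem_centralizer_iff.mpr fun y hy =>
      congrArg Subtype.val (mem_center_iff.mp z.2 ⟨y, hy⟩)⟩
  rw [h, mem_bot] at hzZ
  exact hz (Subtype.ext (Subtype.ext hzZ))

theorem Subgroup.IsSubnormal.isPGroup_of_le_minimal (hN : N.Normal)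
    (hmin : ∀ M : Subgroup G, M.Normal → M ≤ N → M = ⊥ ∨ M = N) {p : ℕ} {K : Subgroup G}
    (hK : K.IsSubnormal) (hKbot : K ≠ ⊥) (hKN : K ≤ N) (hp : IsPGroup p K) : IsPGroup p N := by
  have := pCore_top_normal (G := G) (p := p)
  rcases hmin _ inferInstance (inf_le_right : (⊤ : Subgroup G).pCore p ⊓ N ≤ N) with h | h
  · exact absurd (le_bot_iff.mp (h ▸ le_inf (hK.le_pCore_top hp) hKN)) hKbot
  · exact isPGroup_pCore.to_le (inf_eq_right.mp h)

theorem le_layerSub_of_minimal (hN : N.Normal)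
    (hmin : ∀ M : Subgroup G, M.Normal → M ≤ N → M = ⊥ ∨ M = N) (hbot : N ≠ ⊥)
    (hZ : N ⊓ centralizer (N : Set G) = ⊥) : N ≤ layerSub G := by
  obtain ⟨K, hKN, hK, hKs⟩ := hN.isSubnormal.exists_isSimpleGroup_le hbot
  have hKbot : K ≠ ⊥ := (nontrivial_iff_ne_bot K).mp hKs.toNontrivial
  by_cases hKc : IsMulCommutative K
  · have : Fact (Nat.card K).Prime := ⟨Group.is_simple_iff_prime_card.mp hKs⟩
    have hKp : IsPGroup (Nat.card K) K := IsPGroup.of_card (pow_one _).symm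
    exact ((hK.isPGroup_of_le_minimal hN hmin hKbot hKN hKp).inf_centralizer_ne_bot hbot hZ).elim
  · have hKcl : normalClosure (K : Set G) = N :=
      (hmin _ normalClosure_normal (normalClosure_le_normal hKN)).resolve_left fun h =>
        hKbot (le_bot_iff.mp (h ▸ subset_normalClosure))
    exact hKcl ▸ normalClosure_le_layerSub hK hKc

end MinimalNormal

/-- A minimal normal subgroup of a finite group is abelian or lies in the layer;
in particular `F*(G)` is nontrivial whenever `G` is. -/
theorem minimal_normal_abelian_or_in_layer (G : Type*) [Group G] [Finite G]
    (N : Subgroup G) (hN : N.Normal) (hbot : N ≠ ⊥)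
    (hmin : ∀ M : Subgroup G, M.Normal → M ≤ N → M = ⊥ ∨ M = N) :
    ((∀ x ∈ N, ∀ y ∈ N, x * y = y * x) ∨ N ≤ layerSub G) ∧
      (Nontrivial G → fstarSub G ≠ ⊥) := by
  have hdich : (∀ x ∈ N, ∀ y ∈ N, x * y = y * x) ∨ N ≤ layerSub G := by
    rcases hmin _ inferInstance (inf_le_left : N ⊓ centralizer (N : Set G) ≤ N) with hZ | hZ
    · exact .inr (le_layerSub_of_minimal hN hmin hbot hZ)
    · exact .inl fun x hx y hy => mem_centralizer_iff.mp (inf_eq_left.mp hZ hy) x hx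
  refine ⟨hdich, fun _ hF => hbot ?_⟩
  rw [fstarSub, sup_eq_bot_iff] at hF
  rcases hdich with hcomm | hlayer
  · have : IsMulCommutative N := IsMulCommutative.of_setLike_mul_comm hcomm
    open scoped IsMulCommutative in
    exact le_bot_iff.mp (hF.1 ▸ le_fittingSub hN inferInstance)
  · exact le_bot_iff.mp (hF.2 ▸ hlayer)
end

section
/- The class of Fitting-regular profinite groups is closed under extensions: if N is a closed normal subgroup of a profinite group G with N and G/N both Fitting-regular, then G is Fitting-regular. -/
/-- A topological (profinite) group is pro-`π` if every prime dividing the order of a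
finite quotient by an open normal subgroup lies in `π`. -/
def IsProPi (π : Set ℕ) (G : Type*) [Group G] [TopologicalSpace G] : Prop :=
  ∀ N : Subgroup G, N.Normal → IsOpen (N : Set G) →
    ∀ p : ℕ, p.Prime → p ∣ Nat.card (G ⧸ N) → p ∈ π

/-- A topological group is pronilpotent if all its quotients by open normal subgroups
are nilpotent. -/
def IsPronilpotent (G : Type*) [Group G] [TopologicalSpace G] : Prop :=
  ∀ (N : Subgroup G) (hN : N.Normal), IsOpen (N : Set G) →
    haveI := hN
    Group.IsNilpotent (G ⧸ N)

/-- A component of a profinite group: a finite closed subnormal quasisimple subgroup. -/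
def IsComponentPro {G : Type*} [Group G] [TopologicalSpace G] (Q : Subgroup G) : Prop :=
  IsSubnormalSub Q ∧ IsClosed (Q : Set G) ∧ Finite Q ∧ IsQuasisimple Q

/-- The generalised Fitting subgroup of a topological group: the closed subgroup
generated by all closed normal pronilpotent subgroups and all components. -/
def genFitting (G : Type*) [Group G] [TopologicalSpace G] [IsTopologicalGroup G] : Subgroup G :=
  (⨆ H ∈ {H : Subgroup G | (H.Normal ∧ IsClosed (H : Set G) ∧ IsPronilpotent H) ∨
      IsComponentPro H}, H).topologicalClosure

/-- A topological group is Fitting-degenerate if its generalised Fitting subgroup is trivial. -/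
def FittingDegenerate (G : Type*) [Group G] [TopologicalSpace G] [IsTopologicalGroup G] : Prop :=
  genFitting G = ⊥

/-- A topological group is Fitting-regular if no nontrivial quotient by a closed normal
subgroup is Fitting-degenerate. -/
def FittingRegular (G : Type*) [Group G] [TopologicalSpace G] [IsTopologicalGroup G] : Prop :=
  ∀ (N : Subgroup G) (hN : N.Normal), IsClosed (N : Set G) → N ≠ ⊤ →
    haveI := hN
    ¬ FittingDegenerate (G ⧸ N)

/-!
Let `K ≠ G` be a closed normal subgroup with `G ⧸ K` Fitting-degenerate. If `N ≤ K`, then `G ⧸ K`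
is a proper quotient of the Fitting-regular group `G ⧸ N`. Otherwise the image `M` of `N` in
`G ⧸ K` is a nontrivial quotient of `N`, so `F*(M)` contains a nontrivial closed normal
pronilpotent subgroup `P` or a nontrivial component. Either one yields a nontrivial piece of
`F*(G ⧸ K)`: a component of the normal subgroup `M` is subnormal in `G ⧸ K`, and the closure of the
normal closure of `P` is pronilpotent, because in each finite quotient its image is generated by
finitely many conjugates of the image of `P`, all of them normal nilpotent subgroups of the image
of `M`, and is therefore nilpotent by Fitting's theorem.

Both cases are instances of one statement: a continuous homomorphism with normal image and
nontrivial kernel from a compact Fitting-regular group into a profinite group forces the target to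
have nontrivial generalised Fitting subgroup.
-/

open Subgroup Topology

namespace Subgroup

variable {G : Type*} [Group G]

theorem commutator_le_iff_le_comap_centralizer {H K N : Subgroup G} [N.Normal] :
    ⁅H, K⁆ ≤ N ↔
      H ≤ (centralizer (K.map (QuotientGroup.mk' N))).comap (QuotientGroup.mk' N) := by
  rw [← map_le_iff_le_comap, ← commutator_eq_bot_iff_le_centralizer, ← map_commutator,
    map_eq_bot_iff, QuotientGroup.ker_mk']

theorem sup_commutator_le {H₁ H₂ K N : Subgroup G} [N.Normal] (h₁ : ⁅H₁, K⁆ ≤ N)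
    (h₂ : ⁅H₂, K⁆ ≤ N) : ⁅H₁ ⊔ H₂, K⁆ ≤ N := by
  rw [commutator_le_iff_le_comap_centralizer] at *
  exact sup_le h₁ h₂

theorem commutator_sup_le {H K₁ K₂ N : Subgroup G} [N.Normal] (h₁ : ⁅H, K₁⁆ ≤ N)
    (h₂ : ⁅H, K₂⁆ ≤ N) : ⁅H, K₁ ⊔ K₂⁆ ≤ N := by
  rw [commutator_comm] at *
  exact sup_commutator_le h₁ h₂

def relLowerCentralSeries (A : Subgroup G) : ℕ → Subgroup G
  | 0 => ⊤
  | n + 1 => ⁅relLowerCentralSeries A n, A⁆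

section Fitting

variable (A B : Subgroup G) [A.Normal] [B.Normal]

instance relLowerCentralSeries_normal : ∀ n, (A.relLowerCentralSeries n).Normal
  | 0 => inferInstanceAs (⊤ : Subgroup G).Normal
  | n + 1 =>
    haveI := relLowerCentralSeries_normal n
    inferInstanceAs ⁅A.relLowerCentralSeries n, A⁆.Normal

theorem relLowerCentralSeries_succ_le_lowerCentralSeries : ∀ n,
    A.relLowerCentralSeries (n + 1) ≤ A.lowerCentralSeries n
  | 0 => commutator_le_right _ _
  | n + 1 => commutator_mono (relLowerCentralSeries_succ_le_lowerCentralSeries n) le_rfl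

theorem lowerCentralSeries_sup_add_le : ∀ i j,
    (A ⊔ B).lowerCentralSeries (i + j) ≤ A.relLowerCentralSeries i ⊔ B.relLowerCentralSeries j
  | 0, _ => le_sup_of_le_left le_top
  | i + 1, 0 => le_sup_of_le_right le_top
  | i + 1, j + 1 => by
    have hA := lowerCentralSeries_sup_add_le i (j + 1)
    have hB := lowerCentralSeries_sup_add_le (i + 1) j
    rw [show i + 1 + (j + 1) = i + (j + 1) + 1 by omega, lowerCentralSeries_succ]
    rw [show i + (j + 1) = i + 1 + j by omega] at hA ⊢
    refine commutator_sup_le ?_ ?_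
    · refine (commutator_mono hA le_rfl).trans (sup_commutator_le ?_ ?_)
      · exact le_sup_left
      · exact (commutator_le_left _ _).trans le_sup_right
    · refine (commutator_mono hB le_rfl).trans (sup_commutator_le ?_ ?_)
      · exact (commutator_le_left _ _).trans le_sup_left
      · exact le_sup_right

theorem isNilpotent_sup [Group.IsNilpotent A] [Group.IsNilpotent B] :
    Group.IsNilpotent ↥(A ⊔ B) := by
  obtain ⟨a, ha⟩ := (isNilpotent_iff_lowerCentralSeries A).mp ‹_›
  obtain ⟨b, hb⟩ := (isNilpotent_iff_lowerCentralSeries B).mp ‹_›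
  refine isNilpotent_of_lowerCentralSeries_eq_bot (n := a + 1 + (b + 1)) (le_bot_iff.mp ?_)
  refine (lowerCentralSeries_sup_add_le A B _ _).trans (sup_le ?_ ?_)
  · exact (relLowerCentralSeries_succ_le_lowerCentralSeries A a).trans ha.le
  · exact (relLowerCentralSeries_succ_le_lowerCentralSeries B b).trans hb.le

end Fitting

theorem isNilpotent_of_le_s12 {H K : Subgroup G} (h : H ≤ K) [Group.IsNilpotent K] :
    Group.IsNilpotent H := by
  obtain ⟨n, hn⟩ := (isNilpotent_iff_lowerCentralSeries K).mp ‹_›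
  refine isNilpotent_of_lowerCentralSeries_eq_bot (n := n) (le_bot_iff.mp ?_)
  exact hn ▸ lowerCentralSeries_mono n h

theorem isNilpotent_iSup {ι : Type*} [Finite ι] (f : ι → Subgroup G) [∀ i, (f i).Normal]
    [∀ i, Group.IsNilpotent (f i)] : Group.IsNilpotent ↥(⨆ i, f i) := by
  classical
  have := Fintype.ofFinite ι
  rw [← Finset.sup_univ_eq_iSup]
  induction (Finset.univ : Finset ι) using Finset.induction_on with
  | empty =>
    rw [Finset.sup_empty]
    infer_instance
  | insert a s _ ih =>
    have : (s.sup f).Normal := by rw [Finset.sup_eq_iSup]; infer_instance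
    rw [Finset.sup_insert]
    exact isNilpotent_sup _ _

theorem isNilpotent_iSup_of_le_normalizer {ι : Type*} [Finite ι] {f : ι → Subgroup G}
    {M : Subgroup G} (hfM : ∀ i, f i ≤ M) (hMf : ∀ i, M ≤ normalizer (f i : Set G))
    (hf : ∀ i, Group.IsNilpotent (f i)) : Group.IsNilpotent ↥(⨆ i, f i) := by
  have := fun i => (normal_subgroupOf_iff_le_normalizer (hfM i)).mpr (hMf i)
  have := fun i => (Group.isNilpotent_congr (subgroupOfEquivOfLe (hfM i))).mpr (hf i)
  have hmap : (⨆ i, (f i).subgroupOf M).map M.subtype = ⨆ i, f i := by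
    simp only [map_iSup, subgroupOf_map_subtype, inf_of_le_left (hfM _)]
  rw [← hmap]
  exact (Group.isNilpotent_congr (equivMapOfInjective _ _ M.subtype_injective)).mp
    (isNilpotent_iSup _)

theorem isNilpotent_normalClosure [Finite G] {P M : Subgroup G} [M.Normal] (hPM : P ≤ M)
    (hMP : M ≤ normalizer (P : Set G)) [Group.IsNilpotent P] :
    Group.IsNilpotent (normalClosure (P : Set G)) := by
  let conj (g : G) : Subgroup G := P.map (MulAut.conj g).toMonoidHom
  have : Group.IsNilpotent ↥(⨆ g, conj g) := by
    refine isNilpotent_iSup_of_le_normalizer (M := M) (fun g => ?_) (fun g => ?_) (fun g => ?_)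
    · rw [← Normal.map_conj_eq M g]; exact map_mono hPM
    · rw [← Normal.map_conj_eq M g]; exact (map_mono hMP).trans (le_normalizer_map _)
    · exact (Group.isNilpotent_congr ((MulAut.conj g).subgroupMap P)).mp ‹_›
  -- `normalClosure s` is by definition the subgroup generated by the conjugates of `s`.
  refine isNilpotent_of_le_s12 (K := ⨆ g, conj g) (closure_le _ |>.mpr ?_)
  intro x hx
  obtain ⟨a, ha, hax⟩ := Group.mem_conjugatesOfSet_iff.mp hx
  obtain ⟨c, rfl⟩ := isConj_iff.mp hax
  exact le_iSup conj c ⟨a, ha, rfl⟩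

theorem map_center_of_mulEquiv {X Y : Type*} [Group X] [Group Y] (e : X ≃* Y) :
    (center X).map (e : X →* Y) = center Y := by
  ext y
  rw [← MulEquiv.toMonoidHom_eq_coe, mem_map_equiv, mem_center_iff, mem_center_iff]
  refine ⟨fun h g => ?_, fun h g => ?_⟩
  · simpa using congrArg e (h (e.symm g))
  · exact e.injective (by simpa using h (e g))

theorem map_topologicalClosure_of_discreteTopology {Y Z : Type*} [Group Y] [TopologicalSpace Y]
    [IsTopologicalGroup Y] [Group Z] [TopologicalSpace Z] [DiscreteTopology Z] (S : Subgroup Y)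
    (f : Y →* Z) (hf : Continuous f) :
    S.topologicalClosure.map f = S.map f := by
  refine le_antisymm ?_ (map_mono S.le_topologicalClosure)
  exact map_le_iff_le_comap.mpr (S.topologicalClosure_minimal (le_comap_map f S)
    ((isClosed_discrete (S.map f : Set Z)).preimage hf))

end Subgroup

theorem IsQuasisimple.of_mulEquiv {X Y : Type*} [Group X] [Group Y] (e : X ≃* Y)
    (h : IsQuasisimple X) : IsQuasisimple Y := by
  obtain ⟨hperf, hsimple⟩ := h
  refine ⟨?_, (QuotientGroup.congr _ _ e (map_center_of_mulEquiv e)).symm.isSimpleGroup⟩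
  rw [commutator_def, ← map_top_of_surjective (e : X →* Y) e.surjective, ← map_commutator,
    ← commutator_def, hperf]

theorem IsSubnormalSub.map {X Y : Type*} [Group X] [Group Y] {P : Subgroup X}
    (hP : IsSubnormalSub P) (f : X →* Y) (hf : f.range.Normal) : IsSubnormalSub (P.map f) := by
  obtain ⟨n, s, hs0, hsn, hs⟩ := hP
  refine ⟨n + 1, fun i => if i = n + 1 then ⊤ else (s i).map f, by simp [hs0], by simp, ?_⟩
  intro i hi
  rcases Nat.lt_succ_iff_lt_or_eq.mp hi with hi | rfl
  · obtain ⟨hle, hnormal⟩ := hs i hi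
    have hi' : i ≠ n + 1 := by omega
    have hi'' : i + 1 ≠ n + 1 := by omega
    beta_reduce
    rw [if_neg hi', if_neg hi'']
    rw [normal_subgroupOf_iff_le_normalizer hle] at hnormal
    refine ⟨map_mono hle, (normal_subgroupOf_iff_le_normalizer (map_mono hle)).mpr ?_⟩
    exact (map_mono hnormal).trans (le_normalizer_map f)
  · beta_reduce
    rw [if_neg (show i ≠ i + 1 by omega), if_pos rfl, hsn, ← MonoidHom.range_eq_map]
    exact ⟨le_top, (normal_subgroupOf_iff_le_normalizer le_top).mpr (normalizer_eq_top _).ge⟩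

section Pronilpotent

variable {X Y : Type*} [Group X] [TopologicalSpace X] [Group Y] [TopologicalSpace Y]

theorem IsPronilpotent.of_surjective (hX : IsPronilpotent X) (f : X →* Y) (hfc : Continuous f)
    (hf : Function.Surjective f) : IsPronilpotent Y := by
  intro U hU hUo
  have := hX _ (hU.comap f) (hUo.preimage hfc)
  exact Group.nilpotent_of_surjective _ (QuotientGroup.map_surjective_of_surjective _ U f
    (QuotientGroup.mk_surjective.comp hf) le_rfl)

/-- Second isomorphism theorem, in the form `X / (V ∩ X) ≅ XV / V`. -/
noncomputable def quotientSubgroupOfEquivMap (V X : Subgroup Y) [V.Normal] :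
    X ⧸ V.subgroupOf X ≃* X.map (QuotientGroup.mk' V) :=
  (QuotientGroup.quotientMulEquivOfEq
      (by ext; simp [MonoidHom.mem_ker, Subtype.ext_iff, mem_subgroupOf])).trans
    (QuotientGroup.quotientKerEquivOfSurjective _ ((QuotientGroup.mk' V).subgroupMap_surjective X))

theorem IsPronilpotent.isNilpotent_map {P : Subgroup Y} (hP : IsPronilpotent P) (V : Subgroup Y)
    [V.Normal] (hV : IsOpen (V : Set Y)) : Group.IsNilpotent (P.map (QuotientGroup.mk' V)) :=
  have := hP _ inferInstance (subgroupOf_isOpen P V hV)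
  Group.nilpotent_of_mulEquiv (quotientSubgroupOfEquivMap V P)

def HasOpenNormalBasis (Y : Type*) [Group Y] [TopologicalSpace Y] : Prop :=
  ∀ U ∈ 𝓝 (1 : Y), ∃ V : Subgroup Y, V.Normal ∧ IsOpen (V : Set Y) ∧ (V : Set Y) ⊆ U

theorem isPronilpotent_of_isNilpotent_map (hY : HasOpenNormalBasis Y) {P : Subgroup Y}
    (hP : ∀ (V : Subgroup Y) [V.Normal], IsOpen (V : Set Y) →
      Group.IsNilpotent (P.map (QuotientGroup.mk' V))) : IsPronilpotent P := by
  intro W hW hWo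
  obtain ⟨U, hUo, hWU⟩ := isOpen_induced_iff.mp hWo
  have h1U : ((1 : P) : Y) ∈ U := by
    change (1 : P) ∈ Subtype.val ⁻¹' U
    rw [hWU]
    exact W.one_mem
  obtain ⟨V, hV, hVo, hVU⟩ := hY U (hUo.mem_nhds h1U)
  have := hP V hVo
  have : Group.IsNilpotent (P ⧸ V.subgroupOf P) :=
    Group.nilpotent_of_mulEquiv (quotientSubgroupOfEquivMap V P).symm
  have hVW : V.subgroupOf P ≤ W := fun x hx => by
    change x ∈ (W : Set P)
    rw [← hWU]
    exact hVU hx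
  exact Group.nilpotent_of_surjective _ (QuotientGroup.map_surjective_of_surjective _ W (.id P)
    QuotientGroup.mk_surjective hVW)

end Pronilpotent

section OpenNormalBasis

variable {Y : Type*} [Group Y] [TopologicalSpace Y] [IsTopologicalGroup Y]

theorem HasOpenNormalBasis.of_profinite [CompactSpace Y] [TotallyDisconnectedSpace Y] :
    HasOpenNormalBasis Y := by
  intro U hU
  obtain ⟨O, hOU, hOo, h1O⟩ := mem_nhds_iff.mp hU
  obtain ⟨V, hV⟩ := ProfiniteGrp.exist_openNormalSubgroup_sub_open_nhds_of_one hOo h1O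
  exact ⟨V.toSubgroup, V.isNormal', V.isOpen', hV.trans hOU⟩

theorem HasOpenNormalBasis.quotient (hY : HasOpenNormalBasis Y) (N : Subgroup Y) [N.Normal] :
    HasOpenNormalBasis (Y ⧸ N) := by
  intro U hU
  obtain ⟨V, hV, hVo, hVU⟩ :=
    hY _ (QuotientGroup.continuous_mk.continuousAt.preimage_mem_nhds hU)
  refine ⟨V.map (QuotientGroup.mk' N), hV.map _ (QuotientGroup.mk'_surjective N), ?_, ?_⟩
  · exact QuotientGroup.isOpenMap_coe _ hVo
  · rintro _ ⟨y, hy, rfl⟩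
    exact hVU hy

theorem isPronilpotent_topologicalClosure_normalClosure [CompactSpace Y]
    (hY : HasOpenNormalBasis Y) {P M : Subgroup Y} [M.Normal] (hPM : P ≤ M)
    (hMP : M ≤ normalizer (P : Set Y)) (hP : IsPronilpotent P) :
    IsPronilpotent (normalClosure (P : Set Y)).topologicalClosure := by
  refine isPronilpotent_of_isNilpotent_map hY fun V _ hV => ?_
  have := QuotientGroup.discreteTopology hV
  have := Subgroup.quotient_finite_of_isOpen V hV
  have := hP.isNilpotent_map V hV
  rw [map_topologicalClosure_of_discreteTopology _ _ QuotientGroup.continuous_mk,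
    map_normalClosure _ _ (QuotientGroup.mk'_surjective V), ← coe_map]
  exact isNilpotent_normalClosure (M := M.map (QuotientGroup.mk' V)) (map_mono hPM)
    ((map_mono hMP).trans (le_normalizer_map _))

end OpenNormalBasis

section GenFitting

variable {X Y : Type*} [Group X] [TopologicalSpace X] [Group Y] [TopologicalSpace Y]

theorem genFitting_eq_bot_iff [IsTopologicalGroup Y] [T1Space Y] :
    genFitting Y = ⊥ ↔
      (∀ H : Subgroup Y, H.Normal → IsClosed (H : Set Y) → IsPronilpotent H → H = ⊥) ∧
        ∀ H : Subgroup Y, IsComponentPro H → H = ⊥ := by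
  rw [genFitting, ← le_bot_iff]
  constructor
  · intro h
    have hgen : ∀ H : Subgroup Y, ((H.Normal ∧ IsClosed (H : Set Y) ∧ IsPronilpotent H) ∨
        IsComponentPro H) → H = ⊥ := fun H hH =>
      le_bot_iff.mp (((le_iSup₂ H hH).trans (le_topologicalClosure _)).trans h)
    exact ⟨fun H h₁ h₂ h₃ => hgen H (.inl ⟨h₁, h₂, h₃⟩),
      fun H hH => hgen H (.inr hH)⟩
  · rintro ⟨hnil, hcomp⟩
    refine topologicalClosure_minimal _ (iSup₂_le ?_) (by simp)
    rintro H (⟨h₁, h₂, h₃⟩ | hH)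
    exacts [(hnil H h₁ h₂ h₃).le, (hcomp H hH).le]

theorem IsComponentPro.map [CompactSpace X] [T2Space Y] {P : Subgroup X} (hP : IsComponentPro P)
    (f : X →* Y) (hfc : Continuous f) (hf : Function.Injective f) (hr : f.range.Normal) :
    IsComponentPro (P.map f) := by
  obtain ⟨hsub, hclosed, hfinite, hquasi⟩ := hP
  have e := equivMapOfInjective P f hf
  exact ⟨hsub.map f hr, (hclosed.isCompact.image hfc).isClosed, .of_equiv _ e.toEquiv,
    hquasi.of_mulEquiv e⟩

theorem genFitting_ne_bot_of_injective [IsTopologicalGroup X] [IsTopologicalGroup Y]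
    [CompactSpace X] [T1Space X] [CompactSpace Y] [T2Space Y]
    (hY : HasOpenNormalBasis Y) (f : X →* Y) (hfc : Continuous f) (hf : Function.Injective f)
    (hr : f.range.Normal) (hX : genFitting X ≠ ⊥) : genFitting Y ≠ ⊥ := by
  contrapose! hX
  obtain ⟨hnil, hcomp⟩ := genFitting_eq_bot_iff.mp hX
  refine genFitting_eq_bot_iff.mpr ⟨fun P _ _ hP => ?_, fun P hP => ?_⟩
  · rw [← map_eq_bot_iff_of_injective P hf, eq_bot_iff]
    have hPf : IsPronilpotent (P.map f) := hP.of_surjective (f.subgroupMap P)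
      (continuous_induced_rng.mpr (hfc.comp continuous_subtype_val)) (f.subgroupMap_surjective P)
    have hfP : f.range ≤ normalizer (P.map f : Set Y) := by
      rw [MonoidHom.range_eq_map, ← normalizer_eq_top P]
      exact le_normalizer_map f
    refine le_normalClosure.trans (le_topologicalClosure _) |>.trans
      (hnil _ (is_normal_topologicalClosure _) (isClosed_topologicalClosure _) ?_).le
    exact isPronilpotent_topologicalClosure_normalClosure hY (map_le_range f P) hfP hPf
  · exact (map_eq_bot_iff_of_injective P hf).mp (hcomp _ (hP.map f hfc hf hr))

theorem FittingRegular.genFitting_ne_bot [IsTopologicalGroup X] [IsTopologicalGroup Y]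
    [CompactSpace X] [CompactSpace Y] [T2Space Y]
    (hX : FittingRegular X) (hY : HasOpenNormalBasis Y) (f : X →* Y) (hfc : Continuous f)
    (hr : f.range.Normal) (hf : f.ker ≠ ⊤) : genFitting Y ≠ ⊥ := by
  have hker : IsClosed (f.ker : Set X) := isClosed_singleton.preimage hfc
  have hfc' : Continuous (QuotientGroup.kerLift f) :=
    (QuotientGroup.isQuotientMap_mk f.ker).continuous_iff.mpr hfc
  have := T2Space.of_injective_continuous (QuotientGroup.kerLift_injective f) hfc'
  have hrange : (QuotientGroup.kerLift f).range = f.range := by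
    ext y
    exact ⟨fun ⟨x, hx⟩ => QuotientGroup.induction_on x (fun x hx => ⟨x, hx⟩) hx,
      fun ⟨x, hx⟩ => ⟨x, hx⟩⟩
  exact genFitting_ne_bot_of_injective hY _ hfc' (QuotientGroup.kerLift_injective f)
    (hrange ▸ hr) (hX f.ker inferInstance hker hf)

end GenFitting

theorem fittingRegular_extension_general (G : Type*) [Group G] [TopologicalSpace G] [IsTopologicalGroup G] [CompactSpace G] [TotallyDisconnectedSpace G]
    (N : Subgroup G) [N.Normal] (hNc : IsClosed (N : Set G))
    (h1 : FittingRegular N) (h2 : FittingRegular (G ⧸ N)) :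
    FittingRegular G := by
  intro K _ hKc hKtop hdeg
  -- as an instance, this makes `G ⧸ K` Hausdorff
  have : IsClosed (K : Set G) := hKc
  have hbasis : HasOpenNormalBasis (G ⧸ K) := HasOpenNormalBasis.of_profinite.quotient K
  by_cases hNK : N ≤ K
  · let f := QuotientGroup.map N K (.id G) hNK
    have hf : Function.Surjective f := QuotientGroup.map_surjective_of_surjective _ _ _
      QuotientGroup.mk_surjective hNK
    refine h2.genFitting_ne_bot hbasis f ?_ ?_ ?_ hdeg
    · exact (QuotientGroup.isQuotientMap_mk N).continuous_iff.mpr QuotientGroup.continuous_mk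
    · rw [MonoidHom.range_eq_top.mpr hf]
      infer_instance
    · refine fun hker => hKtop (eq_top_iff.mpr fun g _ => ?_)
      have hg : (g : G ⧸ N) ∈ f.ker := hker ▸ mem_top _
      exact (QuotientGroup.eq_one_iff g).mp hg
  · have : CompactSpace N := isCompact_iff_compactSpace.mp hNc.isCompact
    let f := (QuotientGroup.mk' K).comp N.subtype
    refine h1.genFitting_ne_bot hbasis f ?_ ?_ ?_ hdeg
    · exact QuotientGroup.continuous_mk.comp continuous_subtype_val
    · rw [MonoidHom.range_comp, range_subtype]
      exact Normal.map inferInstance _ (QuotientGroup.mk'_surjective K)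
    · refine fun hker => hNK fun n hn => ?_
      have hn' : (⟨n, hn⟩ : N) ∈ f.ker := hker ▸ mem_top _
      exact (QuotientGroup.eq_one_iff n).mp hn'

/-- The class of Fitting-regular profinite groups is closed under extensions. -/
theorem fittingRegular_extension (G : Type*) [Group G] [TopologicalSpace G] [IsTopologicalGroup G] [CompactSpace G] [T2Space G] [TotallyDisconnectedSpace G]
    (N : Subgroup G) [N.Normal] (hNc : IsClosed (N : Set G))
    (h1 : FittingRegular N) (h2 : FittingRegular (G ⧸ N)) :
    FittingRegular G :=
  fittingRegular_extension_general G N hNc h1 h2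
end
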